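/- Let p ≥ 1, q ≥ 1, 0 < ε < 1, M ≥ 1. For a matrix A ∈ ℝ^{n×d} define the cascaded norm ‖A‖_{(p,q)} = (Σ_{i=1}^n (Σ_{j=1}^d |A_{ij}|^q)^{p/q})^{1/p}. Let A^{(0)} = 0 and let A^{(0)}, A^{(1)}, …, A^{(m)} be matrices of nonnegative integers with entries at most M, entrywise nondecreasing in t (an insertion-only matrix stream). Then every ε-flip chain in the sequence (‖A^{(0)}‖_{(p,q)}, …, ‖A^{(m)}‖_{(p,q)}) has length at most 2 + ((ln n)/p + (ln d)/q + ln M)/ε. -/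

import Mathlib

/-!
Along an increasing chain of times the norms are nondecreasing, so a flip from `a` to `b` can only
happen upwards: `y a < (1 - ε) y b`. Consecutive chain values therefore grow by a factor
`(1 - ε)⁻¹ ≥ exp ε`. The norm of a nonzero integer matrix is at least `1`, so from the second
element on the chain climbs from `1` to at most `n^{1/p} d^{1/q} M`, which takes at most
`((ln n)/p + (ln d)/q + ln M)/ε` steps.
-/

/-- The cascaded norm `‖A‖_{(p,q)} = (∑ i, (∑ j, |A i j|^q)^{p/q})^{1/p}` of a matrix of
nonnegative integers, via real powers. -/
noncomputable def cascNorm {n d : ℕ} (p q : ℝ) (A : Fin n → Fin d → ℕ) : ℝ :=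
  (∑ i, (∑ j, ((A i j : ℝ)) ^ q) ^ (p / q)) ^ (1 / p)

theorem List.IsChain.and {α : Type*} {R S : α → α → Prop} {l : List α} (hR : l.IsChain R)
    (hS : l.IsChain S) : l.IsChain fun a b => R a b ∧ S a b :=
  List.isChain_iff_getElem.2 fun i hi =>
    ⟨List.isChain_iff_getElem.1 hR i hi, List.isChain_iff_getElem.1 hS i hi⟩

theorem pow_length_mul_le_of_isChain {r U : ℝ} (hr : 0 ≤ r) :
    ∀ (x : ℝ) (w : List ℝ), (x :: w).IsChain (fun a b => r * a ≤ b) →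
      (∀ z ∈ x :: w, z ≤ U) → r ^ w.length * x ≤ U
  | x, [], _, hU => by simpa using hU x (by simp)
  | x, z :: w, hchain, hU => by
    rw [List.isChain_cons_cons] at hchain
    calc r ^ (z :: w).length * x = r ^ w.length * (r * x) := by simp [pow_succ, mul_assoc]
      _ ≤ r ^ w.length * z := by gcongr; exact hchain.1
      _ ≤ U := pow_length_mul_le_of_isChain hr z w hchain.2 fun u hu =>
          hU u (List.mem_cons_of_mem x hu)

theorem inv_one_sub_mul_lt_of_flip {ε a b : ℝ} (hε0 : 0 ≤ ε) (hε1 : ε < 1) (ha : 0 ≤ a)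
    (hab : a ≤ b) (hflip : ¬((1 - ε) * b ≤ a ∧ a ≤ (1 + ε) * b)) : (1 - ε)⁻¹ * a < b := by
  have hupper : a ≤ (1 + ε) * b := by linarith [mul_nonneg hε0 (ha.trans hab)]
  have hdrop : a < (1 - ε) * b := lt_of_not_ge fun h => hflip ⟨h, hupper⟩
  rwa [inv_mul_lt_iff₀ (by linarith)]

theorem length_le_of_flipChain {y : ℕ → ℝ} {m : ℕ} {ε U : ℝ} (hε0 : 0 < ε) (hε1 : ε < 1)
    (hmono : MonotoneOn y (Set.Iic m)) (hgap : ∀ t ≤ m, y t = 0 ∨ 1 ≤ y t)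
    (hU : ∀ t ≤ m, y t ≤ U) (hU1 : 1 ≤ U) (l : List ℕ) (hlt : l.IsChain (· < ·))
    (hle : ∀ t ∈ l, t ≤ m)
    (hflip : l.IsChain fun a b => ¬((1 - ε) * y b ≤ y a ∧ y a ≤ (1 + ε) * y b)) :
    (l.length : ℝ) ≤ 2 + Real.log U / ε := by
  have hnonneg : ∀ t ≤ m, 0 ≤ y t := fun t ht => (hgap t ht).elim ge_of_eq (zero_le_one.trans ·)
  have hlogU : 0 ≤ Real.log U / ε := div_nonneg (Real.log_nonneg hU1) hε0.le
  have hr : 0 < (1 - ε)⁻¹ := inv_pos.2 (sub_pos.2 hε1)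
  have hchain : (l.map y).IsChain fun a b => (1 - ε)⁻¹ * a < b :=
    (List.isChain_map y).2 <| (hlt.and hflip).imp_of_mem_imp fun a b ha hb h =>
      inv_one_sub_mul_lt_of_flip hε0.le hε1 (hnonneg a (hle a ha))
        (hmono (hle a ha) (hle b hb) h.1.le) h.2
  rcases l with _ | ⟨a, _ | ⟨b, rest⟩⟩
  · simp only [List.length_nil, Nat.cast_zero]
    linarith
  · simp only [List.length_singleton, Nat.cast_one]
    linarith
  simp only [List.map_cons, List.isChain_cons_cons] at hchain
  have hb_pos : 0 < y b :=
    lt_of_le_of_lt (mul_nonneg hr.le (hnonneg a (hle a (by simp)))) hchain.1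
  have hb_one : 1 ≤ y b := (hgap b (hle b (by simp))).resolve_left hb_pos.ne'
  have hgrowth : ((1 - ε)⁻¹) ^ rest.length ≤ U :=
    calc ((1 - ε)⁻¹) ^ rest.length ≤ ((1 - ε)⁻¹) ^ (rest.map y).length * y b := by
          rw [List.length_map]
          exact le_mul_of_one_le_right (by positivity) hb_one
      _ ≤ U := pow_length_mul_le_of_isChain hr.le (y b) (rest.map y)
          (hchain.2.imp fun _ _ => le_of_lt) (by
            simp only [← List.map_cons, List.forall_mem_map]
            exact fun t ht => hU t (hle t (List.mem_cons_of_mem a ht)))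
  have hlog_ratio : ε ≤ Real.log (1 - ε)⁻¹ := by
    rw [Real.log_inv]
    linarith [Real.log_le_sub_one_of_pos (sub_pos.2 hε1)]
  have hsteps : rest.length * ε ≤ Real.log U :=
    calc rest.length * ε ≤ rest.length * Real.log (1 - ε)⁻¹ := by gcongr
      _ = Real.log (((1 - ε)⁻¹) ^ rest.length) := (Real.log_pow _ _).symm
      _ ≤ Real.log U := Real.log_le_log (by positivity) hgrowth
  simp only [List.length_cons, Nat.cast_add, Nat.cast_one]
  linarith [(le_div_iff₀ hε0).2 hsteps]

section cascNorm

variable {n d : ℕ} {p q : ℝ}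

theorem cascNorm_monotone (hp : 0 ≤ p) (hq : 0 ≤ q) :
    Monotone (cascNorm (n := n) (d := d) p q) := by
  intro A B hAB
  unfold cascNorm
  gcongr with i _ j _
  exact hAB i j

theorem cascNorm_zero (hp : p ≠ 0) (hq : q ≠ 0) :
    cascNorm p q (0 : Fin n → Fin d → ℕ) = 0 := by
  simp [cascNorm, Real.zero_rpow hq, Real.zero_rpow (div_ne_zero hp hq), hp]

theorem one_le_cascNorm (hp : 0 ≤ p) (hq : 0 ≤ q) {A : Fin n → Fin d → ℕ} (hA : A ≠ 0) :
    1 ≤ cascNorm p q A := by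
  obtain ⟨i, j, hij⟩ : ∃ i j, A i j ≠ 0 := by
    by_contra! h
    exact hA (funext₂ h)
  have hrow : 1 ≤ ∑ j, (A i j : ℝ) ^ q :=
    (Real.one_le_rpow (x := (A i j : ℝ)) (by exact_mod_cast Nat.one_le_iff_ne_zero.2 hij) hq).trans
      (Finset.single_le_sum (f := fun j => (A i j : ℝ) ^ q) (fun j _ => by positivity)
        (Finset.mem_univ j))
  have hrows : 1 ≤ ∑ i, (∑ j, (A i j : ℝ) ^ q) ^ (p / q) :=
    (Real.one_le_rpow hrow (div_nonneg hp hq)).trans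
      (Finset.single_le_sum (f := fun i => (∑ j, (A i j : ℝ) ^ q) ^ (p / q))
        (fun i _ => by positivity) (Finset.mem_univ i))
  exact Real.one_le_rpow hrows (by positivity)

theorem cascNorm_eq_zero_or_one_le (hp : 0 < p) (hq : 0 < q) (A : Fin n → Fin d → ℕ) :
    cascNorm p q A = 0 ∨ 1 ≤ cascNorm p q A := by
  rcases eq_or_ne A 0 with rfl | hA
  · exact .inl (cascNorm_zero hp.ne' hq.ne')
  · exact .inr (one_le_cascNorm hp.le hq.le hA)

theorem cascNorm_le (hp : 0 < p) (hq : 0 < q) {M : ℝ} (hM : 0 ≤ M) {A : Fin n → Fin d → ℕ}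
    (hA : ∀ i j, (A i j : ℝ) ≤ M) : cascNorm p q A ≤ (n : ℝ) ^ (1 / p) * (d : ℝ) ^ (1 / q) * M :=
  calc cascNorm p q A ≤ (∑ _i : Fin n, (∑ _j : Fin d, M ^ q) ^ (p / q)) ^ (1 / p) := by
        unfold cascNorm
        gcongr
        exact hA _ _
    _ = (n : ℝ) ^ (1 / p) * (d : ℝ) ^ (1 / q) * M := by
        have hpq : p / q * (1 / p) = 1 / q := by field_simp
        simp only [Finset.sum_const, Finset.card_univ, Fintype.card_fin, nsmul_eq_mul]
        rw [Real.mul_rpow (by positivity) (by positivity), ← Real.rpow_mul (by positivity), hpq,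
          Real.mul_rpow (by positivity) (by positivity), ← Real.rpow_mul hM, mul_one_div,
          div_self hq.ne', Real.rpow_one, mul_assoc]

-- In this form the bound survives `n = 0` or `d = 0`, thanks to the junk value `log 0 = 0`.
theorem cascNorm_le_exp (hp : 0 < p) (hq : 0 < q) {M : ℝ} (hM : 0 < M)
    {A : Fin n → Fin d → ℕ} (hA : ∀ i j, (A i j : ℝ) ≤ M) :
    cascNorm p q A ≤ Real.exp (Real.log n / p + Real.log d / q + Real.log M) := by
  have hrpow (x y : ℝ) : x ^ (1 / y) ≤ Real.exp (Real.log x / y) := by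
    simpa only [mul_one_div] using (le_abs_self _).trans (Real.abs_rpow_le_exp_log_mul x (1 / y))
  rw [Real.exp_add, Real.exp_add, Real.exp_log hM]
  refine (cascNorm_le hp hq hM.le hA).trans ?_
  gcongr
  · exact hrpow _ _
  · exact hrpow _ _

end cascNorm

theorem stmt_13_general (n d m : ℕ) (p q ε M : ℝ) (A : ℕ → Fin n → Fin d → ℕ)
    (hp : 1 ≤ p) (hq : 1 ≤ q) (hε0 : 0 < ε) (hε1 : ε < 1) (hM : 1 ≤ M)
    (hAbd : ∀ t ≤ m, ∀ i j, (A t i j : ℝ) ≤ M)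
    (hAmono : ∀ s t, s ≤ t → t ≤ m → ∀ i j, A s i j ≤ A t i j) :
    ∀ l : List ℕ, l.Chain' (· < ·) → (∀ x ∈ l, x ≤ m) →
      l.Chain' (fun a b =>
        ¬((1 - ε) * cascNorm p q (A b) ≤ cascNorm p q (A a) ∧
          cascNorm p q (A a) ≤ (1 + ε) * cascNorm p q (A b))) →
      (l.length : ℝ) ≤ 2 + (Real.log n / p + Real.log d / q + Real.log M) / ε := by
  intro l hlt hle hflip
  have hp0 : 0 < p := by linarith
  have hq0 : 0 < q := by linarith
  have hL : 0 ≤ Real.log n / p + Real.log d / q + Real.log M :=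
    add_nonneg (add_nonneg (div_nonneg (Real.log_natCast_nonneg n) hp0.le)
      (div_nonneg (Real.log_natCast_nonneg d) hq0.le)) (Real.log_nonneg hM)
  simpa only [Real.log_exp] using length_le_of_flipChain (y := fun t => cascNorm p q (A t))
    hε0 hε1 (fun s _ t ht hst => cascNorm_monotone hp0.le hq0.le (hAmono s t hst ht))
    (fun t _ => cascNorm_eq_zero_or_one_le hp0 hq0 (A t))
    (fun t ht => cascNorm_le_exp hp0 hq0 (by linarith) (hAbd t ht))
    (Real.one_le_exp hL) l hlt hle hflip

/-- Flip-number bound for cascaded norms on insertion-only matrix streams (application of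
Proposition 3.4 noted in Section 3.1): every `ε`-flip chain in
`t ↦ ‖A^{(t)}‖_{(p,q)}` has length at most `2 + ((ln n)/p + (ln d)/q + ln M)/ε`. -/
theorem stmt_13 (n d m : ℕ) (p q ε M : ℝ) (A : ℕ → Fin n → Fin d → ℕ)
    (hp : 1 ≤ p) (hq : 1 ≤ q) (hε0 : 0 < ε) (hε1 : ε < 1) (hM : 1 ≤ M)
    (hA0 : A 0 = 0)
    (hAbd : ∀ t ≤ m, ∀ i j, (A t i j : ℝ) ≤ M)
    (hAmono : ∀ s t, s ≤ t → t ≤ m → ∀ i j, A s i j ≤ A t i j) :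
    ∀ l : List ℕ, l.Chain' (· < ·) → (∀ x ∈ l, x ≤ m) →
      l.Chain' (fun a b =>
        ¬((1 - ε) * cascNorm p q (A b) ≤ cascNorm p q (A a) ∧
          cascNorm p q (A a) ≤ (1 + ε) * cascNorm p q (A b))) →
      (l.length : ℝ) ≤ 2 + (Real.log n / p + Real.log d / q + Real.log M) / ε :=
  stmt_13_general n d m p q ε M A hp hq hε0 hε1 hM hAbd hAmono
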